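/- arXiv:1001.1445 — 4 statements merged into one kernel-verified Lean document; each statement's English description precedes it below -/
import Mathlib

section
/- Let A, B_1, ..., B_n be events on a finite probability space, and let B be the union of the B_i. Suppose (1) for every i, Pr[A | B_i] ≤ ε, and (2) every point of the sample space belongs to at most k of the events B_i (equivalently, the intersection of any more than k of the B_i is empty). Then Pr[A | B] ≤ εk. -/
/-!
Summing `Pr[A ∩ Bᵢ] ≤ ε Pr[Bᵢ]` over `i` counts every point of `A ∩ B` at least once on the
left, and every point of `B` at most `k` times on the right, so
`Pr[A ∩ B] ≤ ∑ᵢ Pr[A ∩ Bᵢ] ≤ ε ∑ᵢ Pr[Bᵢ] ≤ ε k Pr[B]`.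
-/

open Classical Finset

section Multiplicity

variable {ι Ω : Type*} [Fintype ι] (p : Ω → ℝ) (S : ι → Finset Ω)

theorem sum_sum_eq_sum_biUnion_card_mul :
    ∑ i, ∑ ω ∈ S i, p ω = ∑ ω ∈ univ.biUnion S, #{i | ω ∈ S i} * p ω := by
  rw [sum_comm' (s' := fun ω => {i | ω ∈ S i}) (t' := univ.biUnion S)
    (by simpa using fun i ω h => ⟨i, h⟩)]
  simp only [sum_const, nsmul_eq_mul]

variable {p}

theorem sum_biUnion_le_sum_sum (hp : ∀ ω, 0 ≤ p ω) :
    ∑ ω ∈ univ.biUnion S, p ω ≤ ∑ i, ∑ ω ∈ S i, p ω := by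
  rw [sum_sum_eq_sum_biUnion_card_mul]
  refine sum_le_sum fun ω hω => le_mul_of_one_le_left (hp ω) ?_
  obtain ⟨i, -, hi⟩ := mem_biUnion.1 hω
  exact_mod_cast one_le_card.2 ⟨i, by simpa using hi⟩

theorem sum_sum_le_mul_sum_biUnion (hp : ∀ ω, 0 ≤ p ω) {k : ℕ}
    (hk : ∀ ω, #{i | ω ∈ S i} ≤ k) :
    ∑ i, ∑ ω ∈ S i, p ω ≤ k * ∑ ω ∈ univ.biUnion S, p ω := by
  rw [sum_sum_eq_sum_biUnion_card_mul, mul_sum]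
  exact sum_le_sum fun ω _ => mul_le_mul_of_nonneg_right (mod_cast hk ω) (hp ω)

end Multiplicity

-- If `Pr[C] = 0` the quotient is the junk value `0`, but then `Pr[A ∩ C] = 0` as well.
theorem sum_inter_le_mul_sum_of_div_le {Ω : Type*} {p : Ω → ℝ} (hp : ∀ ω, 0 ≤ p ω)
    {A C : Finset Ω} {ε : ℝ} (h : (∑ ω ∈ A ∩ C, p ω) / ∑ ω ∈ C, p ω ≤ ε) :
    ∑ ω ∈ A ∩ C, p ω ≤ ε * ∑ ω ∈ C, p ω := by
  rcases (sum_nonneg fun ω _ => hp ω : 0 ≤ ∑ ω ∈ C, p ω).eq_or_lt with hC | hC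
  · have hAC : ∑ ω ∈ A ∩ C, p ω ≤ ∑ ω ∈ C, p ω :=
      sum_le_sum_of_subset_of_nonneg inter_subset_right fun ω _ _ => hp ω
    rw [← hC] at hAC ⊢
    simpa using hAC
  · exact (div_le_iff₀ hC).1 h

theorem stmt_0_general {Ω : Type*} [Fintype Ω] (p : Ω → ℝ) (hp : ∀ ω, 0 ≤ p ω)
    (n k : ℕ) (ε : ℝ) (A : Finset Ω) (B : Fin n → Finset Ω)
    (hcond : ∀ i, (∑ ω ∈ A ∩ B i, p ω) / (∑ ω ∈ B i, p ω) ≤ ε)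
    (hk : ∀ ω : Ω, (Finset.univ.filter (fun i => ω ∈ B i)).card ≤ k)
    (hBpos' : 0 < ∑ ω ∈ Finset.univ.biUnion B, p ω) :
    (∑ ω ∈ A ∩ Finset.univ.biUnion B, p ω) / (∑ ω ∈ Finset.univ.biUnion B, p ω) ≤ ε * k := by
  obtain ⟨ω, hω⟩ := nonempty_of_sum_ne_zero hBpos'.ne'
  obtain ⟨i, -, -⟩ := mem_biUnion.1 hω
  have hε : 0 ≤ ε :=
    (div_nonneg (sum_nonneg fun ω _ => hp ω) (sum_nonneg fun ω _ => hp ω)).trans (hcond i)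
  rw [div_le_iff₀ hBpos', inter_biUnion]
  calc ∑ ω ∈ univ.biUnion (fun i => A ∩ B i), p ω
      ≤ ∑ i, ∑ ω ∈ A ∩ B i, p ω := sum_biUnion_le_sum_sum _ hp
    _ ≤ ∑ i, ε * ∑ ω ∈ B i, p ω :=
        sum_le_sum fun i _ => sum_inter_le_mul_sum_of_div_le hp (hcond i)
    _ = ε * ∑ i, ∑ ω ∈ B i, p ω := (mul_sum ..).symm
    _ ≤ ε * (k * ∑ ω ∈ univ.biUnion B, p ω) :=
        mul_le_mul_of_nonneg_left (sum_sum_le_mul_sum_biUnion B hp hk) hε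
    _ = ε * k * ∑ ω ∈ univ.biUnion B, p ω := (mul_assoc ..).symm

open Classical Finset in
/-- Conditional-probability union bound: if `Pr[A | B i] ≤ ε` for each `i`, and every
point of the sample space belongs to at most `k` of the events `B i`, then
`Pr[A | ⋃ B i] ≤ ε * k`. -/
theorem stmt_0 {Ω : Type*} [Fintype Ω] (p : Ω → ℝ) (hp : ∀ ω, 0 ≤ p ω)
    (hsum : ∑ ω, p ω = 1)
    (n k : ℕ) (ε : ℝ) (A : Finset Ω) (B : Fin n → Finset Ω)
    (hBpos : ∀ i, 0 < ∑ ω ∈ B i, p ω)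
    (hcond : ∀ i, (∑ ω ∈ A ∩ B i, p ω) / (∑ ω ∈ B i, p ω) ≤ ε)
    (hk : ∀ ω : Ω, (Finset.univ.filter (fun i => ω ∈ B i)).card ≤ k)
    (hBpos' : 0 < ∑ ω ∈ Finset.univ.biUnion B, p ω) :
    (∑ ω ∈ A ∩ Finset.univ.biUnion B, p ω) / (∑ ω ∈ Finset.univ.biUnion B, p ω) ≤ ε * k :=
  stmt_0_general p hp n k ε A B hcond hk hBpos'
end

section
/- Suppose an m × n boolean matrix M is (d,e)-disjunct. Then for any two distinct subsets S, S' of columns, each of size at most d, the boolean OR of the columns in S and the boolean OR of the columns in S' differ in more than e positions. -/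
open Classical in
/-- `M` is `(d,e)`-disjunct: for every column `c0` and set `T` of at most `d` other
columns, the number of rows with a `1` at `c0` and `0` on all of `T` exceeds `e`. -/
def IsDisjunctE (m n d e : ℕ) (M : Fin m → Fin n → Bool) : Prop :=
  ∀ (c0 : Fin n) (T : Finset (Fin n)), c0 ∉ T → T.card ≤ d →
    e < (Finset.univ.filter (fun i : Fin m => M i c0 = true ∧ ∀ j ∈ T, M i j = false)).card

open Classical in
theorem IsDisjunctE.lt_card_orDiff_of_mem_of_notMem {m n d e : ℕ} {M : Fin m → Fin n → Bool}
    (hM : IsDisjunctE m n d e M) {S S' : Finset (Fin n)} {c : Fin n} (hcS : c ∈ S)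
    (hcS' : c ∉ S') (hS' : S'.card ≤ d) :
    e < (Finset.univ.filter
      (fun i : Fin m => (∃ j ∈ S, M i j = true) ≠ (∃ j ∈ S', M i j = true))).card := by
  refine (hM c S' hcS' hS').trans_le (Finset.card_le_card fun i hi => ?_)
  simp only [Finset.mem_filter, Finset.mem_univ, true_and] at hi ⊢
  obtain ⟨hic, hiS'⟩ := hi
  have hS'_off : ¬ ∃ j ∈ S', M i j = true := fun ⟨j, hj, hMj⟩ => by simp [hiS' j hj] at hMj
  exact fun h => hS'_off (h ▸ ⟨c, hcS, hic⟩)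

open Classical in
/-- A `(d,e)`-disjunct matrix: the OR-outcome vectors of two distinct sets of at most `d`
columns differ in more than `e` positions. -/
theorem stmt_4 (m n d e : ℕ) (M : Fin m → Fin n → Bool) (hM : IsDisjunctE m n d e M)
    (S S' : Finset (Fin n)) (hne : S ≠ S') (hS : S.card ≤ d) (hS' : S'.card ≤ d) :
    e < (Finset.univ.filter
      (fun i : Fin m => (∃ j ∈ S, M i j = true) ≠ (∃ j ∈ S', M i j = true))).card := by
  obtain ⟨c, hcS, hcS'⟩ | ⟨c, hcS', hcS⟩ : (∃ c ∈ S, c ∉ S') ∨ ∃ c ∈ S', c ∉ S := by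
    by_contra! h
    exact hne (Finset.Subset.antisymm h.1 h.2)
  · exact hM.lt_card_orDiff_of_mem_of_notMem hcS hcS' hS'
  · simpa only [ne_comm] using hM.lt_card_orDiff_of_mem_of_notMem hcS' hcS hS
end

section
/- Let v_i, v_j be states of a Markov chain with j ≥ i, and let E be an event depending only on the first i steps. Suppose that conditioned on (v_i = u, E), and also conditioned on E alone, the distribution of v_j is δ-close (ℓ∞) to a fixed distribution μ with μ(v) ≥ 1/(cn), and δ ≤ (1/(2cn))^2 with cn ≥ 2. Then |Pr[v_i = u | v_j = v, E] - Pr[v_i = u | E]| ≤ 2δ/(1/(cn) - δ) ≤ 8δcn/3 ≤ 2/(3cn). -/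
/-- Probability of a finite event under the weight function `p`. -/
def prOf {Ω : Type*} [Fintype Ω] (p : Ω → ℝ) (s : Finset Ω) : ℝ := ∑ ω ∈ s, p ω

open Finset

theorem prOf_mono {Ω : Type*} [Fintype Ω] {p : Ω → ℝ} (hp : ∀ ω, 0 ≤ p ω) {s t : Finset Ω}
    (hst : s ⊆ t) : prOf p s ≤ prOf p t :=
  sum_le_sum_of_subset_of_nonneg hst fun ω _ _ => hp ω

/-- Bayes' rule `a/c - b/d = (b/d) (a/b - c/d) / (c/d)`, reading `a, b, c, d` as
`Pr[V ∩ U], Pr[U], Pr[V], Pr[Ω]`. -/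
theorem abs_div_sub_div_le_of_abs_div_sub_div_le {a b c d ε m : ℝ} (hb : 0 < b) (hbd : b ≤ d)
    (hm : 0 < m) (hmcd : m ≤ c / d) (h : |a / b - c / d| ≤ ε) :
    |a / c - b / d| ≤ ε / m := by
  have hd : 0 < d := hb.trans_le hbd
  have hcd : 0 < c / d := hm.trans_le hmcd
  have hc : c ≠ 0 := by rintro rfl; simp at hcd
  have hbayes : a / c - b / d = b / d * (a / b - c / d) / (c / d) := by field_simp
  rw [hbayes, abs_div, abs_mul, abs_of_pos (div_pos hb hd), abs_of_pos hcd]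
  have hnum : b / d * |a / b - c / d| ≤ ε :=
    (mul_le_of_le_one_left (abs_nonneg _) ((div_le_one hd).2 hbd)).trans h
  exact div_le_div₀ ((abs_nonneg _).trans h) hnum hm hmcd

theorem three_div_four_mul_le_one_div_sub {x δ : ℝ} (hx : 1 ≤ x)
    (hδ : δ ≤ (1 / (2 * x)) ^ 2) : 3 / (4 * x) ≤ 1 / x - δ := by
  have hδ' : δ ≤ 1 / (4 * x) := by
    calc δ ≤ (1 / (2 * x)) ^ 2 := hδ
      _ = 1 / (4 * x) * (1 / x) := by ring
      _ ≤ 1 / (4 * x) * 1 := by gcongr; exact div_le_one_of_le₀ hx (by linarith)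
      _ = 1 / (4 * x) := mul_one _
  calc 3 / (4 * x) = 1 / x - 1 / (4 * x) := by field_simp; ring
    _ ≤ 1 / x - δ := by linarith

theorem mul_le_div_of_le_sq {x δ : ℝ} (hx : 0 < x) (hδ : δ ≤ (1 / (2 * x)) ^ 2) :
    8 * δ * x / 3 ≤ 2 / (3 * x) := by
  calc 8 * δ * x / 3 ≤ 8 * (1 / (2 * x)) ^ 2 * x / 3 := by gcongr
    _ = 2 / (3 * x) := by field_simp; ring

open Classical in
theorem stmt_11_general {Ω : Type*} [Fintype Ω] (p : Ω → ℝ) (hp : ∀ ω, 0 ≤ p ω)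
    (U Vv E : Finset Ω)
    (c n δ μv : ℝ) (hcn : 2 ≤ c * n)
    (hδ0 : 0 ≤ δ) (hδ : δ ≤ (1 / (2 * c * n)) ^ 2) (hμ : 1 / (c * n) ≤ μv)
    (hUEpos : 0 < prOf p (U ∩ E))
    (hclose1 : |prOf p (Vv ∩ (U ∩ E)) / prOf p (U ∩ E) - μv| ≤ δ)
    (hclose2 : |prOf p (Vv ∩ E) / prOf p E - μv| ≤ δ) :
    |prOf p (U ∩ (Vv ∩ E)) / prOf p (Vv ∩ E) - prOf p (U ∩ E) / prOf p E| ≤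
        2 * δ / (1 / (c * n) - δ) ∧
      2 * δ / (1 / (c * n) - δ) ≤ 8 * δ * c * n / 3 ∧
      8 * δ * c * n / 3 ≤ 2 / (3 * c * n) := by
  have hx : 1 ≤ c * n := by linarith
  have hδx : δ ≤ (1 / (2 * (c * n))) ^ 2 := by rwa [← mul_assoc]
  have hgap := three_div_four_mul_le_one_div_sub hx hδx
  have hgap_pos : 0 < 1 / (c * n) - δ := lt_of_lt_of_le (by positivity) hgap
  have hlower : 1 / (c * n) - δ ≤ prOf p (Vv ∩ E) / prOf p E := by
    linarith [(abs_le.mp hclose2).1]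
  have hclose : |prOf p (Vv ∩ (U ∩ E)) / prOf p (U ∩ E) - prOf p (Vv ∩ E) / prOf p E| ≤ 2 * δ :=
    (abs_sub_le _ μv _).trans <| by
      rw [abs_sub_comm μv, two_mul]; exact add_le_add hclose1 hclose2
  refine ⟨?_, ?_, ?_⟩
  · rw [inter_left_comm]
    exact abs_div_sub_div_le_of_abs_div_sub_div_le hUEpos (prOf_mono hp inter_subset_right)
      hgap_pos hlower hclose
  · calc 2 * δ / (1 / (c * n) - δ) ≤ 2 * δ / (3 / (4 * (c * n))) :=
          div_le_div_of_nonneg_left (by positivity) (by positivity) hgap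
      _ = 8 * δ * c * n / 3 := by field_simp; ring
  · simpa only [mul_assoc] using mul_le_div_of_le_sq (by positivity) hδx

open Classical in
/-- Near-independence across the mixing time: with `U = {v_i = u}`, `Vv = {v_j = v}` and a
history event `E`, if the conditional distributions of `v_j` (given `U ∩ E`, resp. `E`)
assign `v` a probability `δ`-close to `μ(v) ≥ 1/(cn)`, with `δ ≤ (1/(2cn))²` and `cn ≥ 2`,
then `|Pr[U | Vv ∩ E] - Pr[U | E]| ≤ 2δ/(1/(cn) - δ) ≤ 8δcn/3 ≤ 2/(3cn)`. -/
theorem stmt_11 {Ω : Type*} [Fintype Ω] (p : Ω → ℝ) (hp : ∀ ω, 0 ≤ p ω)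
    (hsum : ∑ ω, p ω = 1) (U Vv E : Finset Ω)
    (c n δ μv : ℝ) (hc : 1 ≤ c) (hn : 1 ≤ n) (hcn : 2 ≤ c * n)
    (hδ0 : 0 ≤ δ) (hδ : δ ≤ (1 / (2 * c * n)) ^ 2) (hμ : 1 / (c * n) ≤ μv)
    (hEpos : 0 < prOf p E) (hUEpos : 0 < prOf p (U ∩ E)) (hVEpos : 0 < prOf p (Vv ∩ E))
    (hclose1 : |prOf p (Vv ∩ (U ∩ E)) / prOf p (U ∩ E) - μv| ≤ δ)
    (hclose2 : |prOf p (Vv ∩ E) / prOf p E - μv| ≤ δ) :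
    |prOf p (U ∩ (Vv ∩ E)) / prOf p (Vv ∩ E) - prOf p (U ∩ E) / prOf p E| ≤
        2 * δ / (1 / (c * n) - δ) ∧
      2 * δ / (1 / (c * n) - δ) ≤ 8 * δ * c * n / 3 ∧
      8 * δ * c * n / 3 ≤ 2 / (3 * c * n) :=
  stmt_11_general p hp U Vv E c n δ μv hcn hδ0 hδ hμ hUEpos hclose1 hclose2
end

section
/- Let M be a random m × n boolean matrix with independent rows such that for every fixed column v and every fixed set A of at most d other columns, each row separates (v, A) with probability at least π. Fix a set S of at most d columns. Then with probability at least 1 - n·(1-π)^m over M, for every set S' ≠ S of at most d columns, the OR of columns of S differs from the OR of columns of S' in at least one position. In particular m = O((log n)/π) rows suffice for this fixed-input guarantee, a factor ≈ d fewer than the O(d log(n/d)/π) needed for full d-disjunctness. -/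
/-!
A row separating `v` from `S.erase v` (which is `S` itself when `v ∉ S`) distinguishes `S` from
every `S' ≠ S`: if `v ∈ S' \ S`, the row is `1` on `S'` at `v` and `0` on all of `S`; if
`S' ⊊ S` and `v ∈ S \ S'`, it is `1` on `S` at `v` and `0` on all of `S' ⊆ S.erase v`. So only
the `n` events "no row separates `(v, S.erase v)`" have to be excluded, and a union bound over
them gives the claim.
-/

open Finset

theorem Finset.sum_filter_le_sum_sum_filter {ι Ω : Type*} [Fintype Ω] (p : Ω → ℝ)
    (hp : ∀ ω, 0 ≤ p ω) (s : Finset ι) {E : Ω → Prop} {F : ι → Ω → Prop} [DecidablePred E]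
    [∀ i, DecidablePred (F i)] (hcover : ∀ ω, E ω → ∃ i ∈ s, F i ω) :
    ∑ ω with E ω, p ω ≤ ∑ i ∈ s, ∑ ω with F i ω, p ω := by
  calc ∑ ω with E ω, p ω
      ≤ ∑ ω, ∑ i ∈ s, if F i ω then p ω else 0 := by
        rw [sum_filter]
        refine sum_le_sum fun ω _ => ?_
        split_ifs with hE
        · obtain ⟨i, hi, hF⟩ := hcover ω hE
          calc p ω = if F i ω then p ω else 0 := (if_pos hF).symm
            _ ≤ _ := single_le_sum (f := fun j => if F j ω then p ω else 0)
              (fun j _ => ite_nonneg (hp ω) le_rfl) hi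
        · exact sum_nonneg fun j _ => ite_nonneg (hp ω) le_rfl
    _ = ∑ i ∈ s, ∑ ω with F i ω, p ω := by
        rw [sum_comm]
        simp only [sum_filter]

-- Reducible, so that `Decidable` instances are found through the underlying conjunction.
abbrev Separates {α : Type*} (r : α → Bool) (v : α) (A : Finset α) : Prop :=
  r v = true ∧ ∀ j ∈ A, r j = false

section Separation

variable {ι α : Type*} [DecidableEq α] {r : α → Bool} {S S' : Finset α} {v : α}

theorem or_ne_of_separates_of_mem_sdiff (hv : v ∈ S' \ S) (h : Separates r v (S.erase v)) :
    (∃ j ∈ S, r j = true) ≠ (∃ j ∈ S', r j = true) := by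
  rw [mem_sdiff] at hv
  rw [erase_eq_of_notMem hv.2] at h
  have hS : ¬∃ j ∈ S, r j = true := fun ⟨j, hj, hrj⟩ => by simp [h.2 j hj] at hrj
  exact fun heq => hS (heq ▸ ⟨v, hv.1, h.1⟩)

theorem or_ne_of_separates_of_subset (hsub : S' ⊆ S) (hv : v ∈ S \ S')
    (h : Separates r v (S.erase v)) :
    (∃ j ∈ S, r j = true) ≠ (∃ j ∈ S', r j = true) := by
  rw [mem_sdiff] at hv
  have hS' : ¬∃ j ∈ S', r j = true := fun ⟨j, hj, hrj⟩ => by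
    have hj' : j ∈ S.erase v := mem_erase.2 ⟨fun hjv => hv.2 (hjv ▸ hj), hsub hj⟩
    simp [h.2 j hj'] at hrj
  exact fun heq => hS' (heq ▸ ⟨v, hv.1, h.1⟩)

theorem exists_or_ne_of_forall_separates (M : ι → α → Bool)
    (h : ∀ v, ∃ i, Separates (M i) v (S.erase v)) (hne : S' ≠ S) :
    ∃ i, (∃ j ∈ S, M i j = true) ≠ (∃ j ∈ S', M i j = true) := by
  by_cases hsub : S' ⊆ S
  · obtain ⟨v, hvS, hvS'⟩ := exists_of_ssubset (hsub.ssubset_of_ne hne)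
    obtain ⟨i, hi⟩ := h v
    exact ⟨i, or_ne_of_separates_of_subset hsub (mem_sdiff.2 ⟨hvS, hvS'⟩) hi⟩
  · obtain ⟨v, hvS', hvS⟩ := not_subset.1 hsub
    obtain ⟨i, hi⟩ := h v
    exact ⟨i, or_ne_of_separates_of_mem_sdiff (mem_sdiff.2 ⟨hvS', hvS⟩) hi⟩

end Separation

open Classical Finset in
theorem stmt_19_general (m n d : ℕ) (π : ℝ)
    {Ω : Type*} [Fintype Ω] (p : Ω → ℝ) (hp : ∀ ω, 0 ≤ p ω) (hsum : ∑ ω, p ω = 1)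
    (M : Ω → Fin m → Fin n → Bool)
    (hsep : ∀ (v : Fin n) (A : Finset (Fin n)), v ∉ A → A.card ≤ d →
      ∑ ω ∈ Finset.univ.filter (fun ω =>
          ∀ i : Fin m, ¬(M ω i v = true ∧ ∀ j ∈ A, M ω i j = false)), p ω
        ≤ (1 - π) ^ m)
    (S : Finset (Fin n)) (hS : S.card ≤ d) :
    1 - (n : ℝ) * (1 - π) ^ m ≤
      ∑ ω ∈ Finset.univ.filter (fun ω =>
          ∀ S' : Finset (Fin n), S' ≠ S → S'.card ≤ d →
            ∃ i : Fin m, (∃ j ∈ S, M ω i j = true) ≠ (∃ j ∈ S', M ω i j = true)), p ω := by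
  set Good : Ω → Prop := fun ω => ∀ S' : Finset (Fin n), S' ≠ S → S'.card ≤ d →
    ∃ i : Fin m, (∃ j ∈ S, M ω i j = true) ≠ (∃ j ∈ S', M ω i j = true)
  have hcover : ∀ ω, ¬Good ω → ∃ v ∈ univ, ∀ i, ¬Separates (M ω i) v (S.erase v) := by
    intro ω hω
    by_contra! hsepω
    exact hω fun S' hne _ => exists_or_ne_of_forall_separates (M ω)
      (fun v => hsepω v (mem_univ v)) hne
  have hbad : ∑ ω with ¬Good ω, p ω ≤ n * (1 - π) ^ m :=
    calc ∑ ω with ¬Good ω, p ω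
        ≤ ∑ v : Fin n, ∑ ω with ∀ i, ¬Separates (M ω i) v (S.erase v), p ω :=
          sum_filter_le_sum_sum_filter p hp univ hcover
      _ ≤ ∑ _v : Fin n, (1 - π) ^ m :=
          sum_le_sum fun v _ => hsep v _ (notMem_erase v S) (card_erase_le.trans hS)
      _ = n * (1 - π) ^ m := by simp
  rw [← sum_filter_add_sum_filter_not univ Good] at hsum
  linarith

open Classical Finset in
/-- Fixed-input guarantee for a random measurement matrix: if rows independently separate
any fixed pair `(v, A)` (`v ∉ A`, `|A| ≤ d`) with probability at least `π` — so that no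
row separates `(v,A)` with probability at most `(1-π)^m` — then for a fixed set `S` of at
most `d` columns, with probability at least `1 - n(1-π)^m` the OR of the columns of `S`
differs from the OR of the columns of every other set `S'` of at most `d` columns. -/
theorem stmt_19 (m n d : ℕ) (π : ℝ) (hπ0 : 0 ≤ π) (hπ1 : π ≤ 1)
    {Ω : Type*} [Fintype Ω] (p : Ω → ℝ) (hp : ∀ ω, 0 ≤ p ω) (hsum : ∑ ω, p ω = 1)
    (M : Ω → Fin m → Fin n → Bool)
    (hsep : ∀ (v : Fin n) (A : Finset (Fin n)), v ∉ A → A.card ≤ d →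
      ∑ ω ∈ Finset.univ.filter (fun ω =>
          ∀ i : Fin m, ¬(M ω i v = true ∧ ∀ j ∈ A, M ω i j = false)), p ω
        ≤ (1 - π) ^ m)
    (S : Finset (Fin n)) (hS : S.card ≤ d) :
    1 - (n : ℝ) * (1 - π) ^ m ≤
      ∑ ω ∈ Finset.univ.filter (fun ω =>
          ∀ S' : Finset (Fin n), S' ≠ S → S'.card ≤ d →
            ∃ i : Fin m, (∃ j ∈ S, M ω i j = true) ≠ (∃ j ∈ S', M ω i j = true)), p ω :=
  stmt_19_general m n d π p hp hsum M hsep S hS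
end
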